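/- Let g : R^n → ℤ/pℤ and let d be a natural number with 0 ≤ d ≤ n(p^k−1). Then g is (d+1)-null if and only if g ∈ Ω_d^n. [g is called D-null if for every choice of r^{(1)}, …, r^{(D)} ∈ R^n, the iterated difference Δ_{r^{(1)}}∘⋯∘Δ_{r^{(D)}} g is identically zero, where Δ_r g(x) = g(x+r) − g(x).] -/

import Mathlib

/-! By Lucas's theorem, `C(a, m) mod p` only depends on `a mod p^k` when `m < p^k`, so the functions
`φ_m` (`m < p^k`) obey Vandermonde's identity and Pascal's rule on `ℤ/p^kℤ`. Pascal's rule gives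
`Δ_{e_i} φ_β = φ_{β - e_i}`, so applying `γ_i` differences in each direction `e_i` and evaluating at
`0` reads off the coefficient of `φ_γ`: the `φ_γ` with `γ ∈ [0, p^k)^n` are linearly independent,
hence a basis by counting. Vandermonde's identity shows that `Δ_r φ_α` is a combination of `φ_β`
with `|β| < |α|`, so every element of `Ω_d` is `(d+1)`-null. Conversely, if `g` is `(d+1)`-null,
its coefficient on `φ_γ` is an iterated difference of order `|γ|`, which vanishes when `|γ| > d`. -/

/-- The binomial phi function `φ_m : ℤ/p^kℤ → ℤ/pℤ`, `φ_m(x) = C(x̄, m) mod p`. -/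
def phi (p k m : ℕ) (x : ZMod (p ^ k)) : ZMod p := (x.val.choose m : ZMod p)

/-- The multivariate phi function `φ_α(x) = φ_{α_1}(x_1)⋯φ_{α_n}(x_n)`. -/
def phiN (p k n : ℕ) (α : Fin n → ℕ) (x : Fin n → ZMod (p ^ k)) : ZMod p :=
  ∏ i, phi p k (α i) (x i)

open Finset fwdDiff

theorem Nat.choose_modEq_choose_mod_pow {p : ℕ} [Fact p.Prime] {k m : ℕ} (hm : m < p ^ k)
    (a : ℕ) : a.choose m ≡ (a % p ^ k).choose m [MOD p] := by
  induction k generalizing m a with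
  | zero => simp_all [Nat.ModEq.refl]
  | succ k ih =>
    have hmp : m / p < p ^ k := Nat.div_lt_of_lt_mul (by rwa [← pow_succ'])
    have hmod : a % p ^ (k + 1) % p = a % p := Nat.mod_mod_of_dvd a (dvd_pow_self p k.succ_ne_zero)
    have hdiv : a % p ^ (k + 1) / p = a / p % p ^ k := by
      rw [pow_succ', Nat.mod_mul_right_div_self]
    calc a.choose m
        ≡ (a % p).choose (m % p) * (a / p).choose (m / p) [MOD p] :=
          Choose.choose_modEq_choose_mod_mul_choose_div_nat
      _ ≡ (a % p).choose (m % p) * (a / p % p ^ k).choose (m / p) [MOD p] :=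
          (ih hmp _).mul_left _
      _ = (a % p ^ (k + 1) % p).choose (m % p) * (a % p ^ (k + 1) / p).choose (m / p) := by
          rw [hmod, hdiv]
      _ ≡ (a % p ^ (k + 1)).choose m [MOD p] :=
          Choose.choose_modEq_choose_mod_mul_choose_div_nat.symm

section IteratedFwdDiff

variable {G M : Type*} [AddCommMonoid G] [AddCommGroup M]

def IsNull (D : ℕ) (g : G → M) : Prop :=
  ∀ l : List G, l.length = D → l.foldr fwdDiff g = 0

@[simp]
theorem fwdDiff_zero (h : G) : Δ_[h] (0 : G → M) = 0 :=
  funext fun _ => sub_self 0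

@[simp]
theorem foldr_fwdDiff_zero (l : List G) : l.foldr fwdDiff (0 : G → M) = 0 := by
  induction l <;> simp_all

variable (R : Type*) [Semiring R] [Module R M]

def fwdDiffFoldₗ (l : List G) : (G → M) →ₗ[R] G → M where
  toFun g := l.foldr fwdDiff g
  map_add' f g := by induction l <;> simp_all
  map_smul' c f := by induction l <;> simp_all

@[simp]
theorem fwdDiffFoldₗ_apply (l : List G) (g : G → M) : fwdDiffFoldₗ R l g = l.foldr fwdDiff g :=
  rfl

variable {R}

theorem IsNull.mono {D D' : ℕ} {g : G → M} (h : IsNull D g) (hD : D ≤ D') : IsNull D' g := by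
  intro l hl
  rw [← List.take_append_drop (D' - D) l, List.foldr_append, h _ (by simp; omega),
    foldr_fwdDiff_zero]

end IteratedFwdDiff

section phi

variable {p k : ℕ} [Fact p.Prime]

theorem phi_natCast {m : ℕ} (hm : m < p ^ k) (a : ℕ) :
    phi p k m (a : ZMod (p ^ k)) = (a.choose m : ZMod p) := by
  rw [phi, ZMod.val_natCast, (ZMod.natCast_eq_natCast_iff _ _ _).mpr
    (Nat.choose_modEq_choose_mod_pow hm a)]

theorem phi_eq_zero_of_le {m : ℕ} (hm : p ^ k ≤ m) (x : ZMod (p ^ k)) : phi p k m x = 0 := by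
  rw [phi, Nat.choose_eq_zero_of_lt ((ZMod.val_lt x).trans_le hm), Nat.cast_zero]

@[simp]
theorem phi_zero_left (x : ZMod (p ^ k)) : phi p k 0 x = 1 := by simp [phi]

theorem phi_apply_zero (m : ℕ) : phi p k m 0 = if m = 0 then 1 else 0 := by
  rcases m with _ | m <;> simp [phi]

theorem phi_add {m : ℕ} (hm : m < p ^ k) (x y : ZMod (p ^ k)) :
    phi p k m (x + y) = ∑ j ∈ range (m + 1), phi p k j x * phi p k (m - j) y := by
  have hxy : x + y = ((x.val + y.val : ℕ) : ZMod (p ^ k)) := by simp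
  rw [hxy, phi_natCast hm, Nat.add_choose_eq,
    Nat.sum_antidiagonal_eq_sum_range_succ (fun i j => x.val.choose i * y.val.choose j)]
  push_cast
  rfl

theorem phi_add_one {m : ℕ} (hm : m + 1 < p ^ k) (y : ZMod (p ^ k)) :
    phi p k (m + 1) (y + 1) = phi p k m y + phi p k (m + 1) y := by
  have hy : y + 1 = ((y.val + 1 : ℕ) : ZMod (p ^ k)) := by simp
  rw [hy, phi_natCast hm, Nat.choose_succ_succ, Nat.cast_add]
  rfl

end phi

section phiN

variable {p k n : ℕ} [Fact p.Prime]

theorem phiN_eq_zero_of_le {α : Fin n → ℕ} (i : Fin n) (hi : p ^ k ≤ α i) : phiN p k n α = 0 :=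
  funext fun x => prod_eq_zero (mem_univ i) (phi_eq_zero_of_le hi (x i))

theorem phiN_zero_left : phiN p k n 0 = 1 := funext fun x => by simp [phiN]

theorem phiN_apply_zero (γ : Fin n → ℕ) : phiN p k n γ 0 = if γ = 0 then 1 else 0 := by
  simp only [phiN, Pi.zero_apply, phi_apply_zero, prod_boole, mem_univ, true_implies, funext_iff]

theorem phiN_add {α : Fin n → ℕ} (hα : ∀ i, α i < p ^ k) (x y : Fin n → ZMod (p ^ k)) :
    phiN p k n α (x + y) = ∑ β ∈ Fintype.piFinset fun i => range (α i + 1),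
      (∏ i, phi p k (α i - β i) (y i)) * phiN p k n β x := by
  simp only [phiN, Pi.add_apply, phi_add (hα _), prod_univ_sum, ← prod_mul_distrib, mul_comm]

theorem fwdDiff_single_phiN (i : Fin n) {β : Fin n → ℕ} (hβ : ∀ j, β j < p ^ k) :
    Δ_[Pi.single i 1] (phiN p k n β) =
      if β i = 0 then 0 else phiN p k n (β - Pi.single i 1) := by
  funext x
  have hsplit : ∀ (γ : Fin n → ℕ) (z : Fin n → ZMod (p ^ k)), (∀ j ≠ i, γ j = β j) →
      (∀ j ≠ i, z j = x j) →
      phiN p k n γ z = phi p k (γ i) (z i) * ∏ j ∈ {i}ᶜ, phi p k (β j) (x j) := by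
    intro γ z hγ hz
    rw [phiN, Fintype.prod_eq_mul_prod_compl i]
    congr 1
    refine prod_congr rfl fun j hj => ?_
    have hji : j ≠ i := by simpa using hj
    rw [hγ j hji, hz j hji]
  have hshift : ∀ j ≠ i, (x + Pi.single i 1 : Fin n → ZMod (p ^ k)) j = x j := fun j hj => by
    simp [hj]
  rw [fwdDiff, hsplit β _ (fun _ _ => rfl) hshift, hsplit β x (fun _ _ => rfl) (fun _ _ => rfl)]
  rcases hm : β i with _ | m
  · simp
  · rw [if_neg (by omega), hsplit _ x (fun j hj => by simp [hj]) (fun _ _ => rfl)]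
    have hstep := phi_add_one (hm ▸ hβ i) (x i)
    simp only [hm, Pi.add_apply, Pi.single_eq_same, Pi.sub_apply, add_tsub_cancel_right]
    rw [hstep]
    ring

theorem foldr_fwdDiff_single_phiN (L : List (Fin n)) {β : Fin n → ℕ} (hβ : ∀ j, β j < p ^ k) :
    (L.map fun i => Pi.single i (1 : ZMod (p ^ k))).foldr fwdDiff (phiN p k n β) =
      if ∀ j, L.count j ≤ β j then phiN p k n (β - (L.count ·)) else 0 := by
  induction L with
  | nil => simp [Pi.sub_def]
  | cons i L ih =>
    have hcount (j : Fin n) : (i :: L).count j = L.count j + (Pi.single i 1 : Fin n → ℕ) j := by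
      rcases eq_or_ne j i with rfl | hji <;> simp [*, Ne.symm]
    rw [List.map_cons, List.foldr_cons, ih]
    by_cases hle : ∀ j, L.count j ≤ β j
    · have hcond : (∀ j, (i :: L).count j ≤ β j) ↔ ¬(β - (L.count ·)) i = 0 := by
        refine ⟨fun h => ?_, fun h j => ?_⟩
        · have := h i
          simp only [hcount, Pi.single_eq_same, Pi.sub_apply] at this ⊢
          omega
        rcases eq_or_ne j i with rfl | hji
        · simp only [hcount, Pi.single_eq_same, Pi.sub_apply] at h ⊢
          omega
        · simpa [hcount, hji] using hle j
      have hsub : β - ((i :: L).count ·) = β - (L.count ·) - Pi.single i 1 := by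
        ext j
        simp [hcount, tsub_tsub]
      rw [if_pos hle, fwdDiff_single_phiN (β := β - (L.count ·)) i
          fun j => tsub_le_self.trans_lt (hβ j),
        if_congr hcond rfl rfl, ite_not, hsub]
    · rw [if_neg hle, fwdDiff_zero,
        if_neg fun h => hle fun j => (List.count_le_count_cons ..).trans (h j)]

end phiN

/-- The space `Ω_d^n`. -/
def phiSpan (p k n d : ℕ) : Submodule (ZMod p) ((Fin n → ZMod (p ^ k)) → ZMod p) :=
  Submodule.span (ZMod p) {f | ∃ α : Fin n → ℕ, (∑ i, α i) ≤ d ∧ f = phiN p k n α}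

section phiSpan

variable {p k n : ℕ} [Fact p.Prime]

theorem fwdDiff_phiN {α : Fin n → ℕ} (hα : ∀ i, α i < p ^ k) (r : Fin n → ZMod (p ^ k)) :
    Δ_[r] (phiN p k n α) = ∑ β ∈ (Fintype.piFinset fun i => range (α i + 1)).erase α,
      (∏ i, phi p k (α i - β i) (r i)) • phiN p k n β := by
  have hα_mem : α ∈ Fintype.piFinset fun i => range (α i + 1) := by simp
  funext x
  rw [fwdDiff, phiN_add hα, ← add_sum_erase _ _ hα_mem, Finset.sum_apply]
  simp

theorem fwdDiff_phiN_mem_phiSpan {m : ℕ} {α : Fin n → ℕ} (hα : ∑ i, α i ≤ m + 1)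
    (r : Fin n → ZMod (p ^ k)) : Δ_[r] (phiN p k n α) ∈ phiSpan p k n m := by
  by_cases hbig : ∃ i, p ^ k ≤ α i
  · obtain ⟨i, hi⟩ := hbig
    rw [phiN_eq_zero_of_le i hi, fwdDiff_zero]
    exact zero_mem _
  push Not at hbig
  rw [fwdDiff_phiN hbig]
  refine sum_mem fun β hβ => Submodule.smul_mem _ _ (Submodule.subset_span ⟨β, ?_, rfl⟩)
  obtain ⟨hne, hβ⟩ := mem_erase.mp hβ
  have hle : β ≤ α := fun i => Nat.lt_succ_iff.mp (mem_range.mp (Fintype.mem_piFinset.mp hβ i))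
  exact Nat.le_of_lt_succ ((Fintype.sum_strictMono (lt_of_le_of_ne hle hne)).trans_le hα)

theorem phiSpan_succ_le_comap_fwdDiff (m : ℕ) (r : Fin n → ZMod (p ^ k)) :
    phiSpan p k n (m + 1) ≤ (phiSpan p k n m).comap (fwdDiffFoldₗ (ZMod p) [r]) :=
  Submodule.span_le.mpr fun _ ⟨_, hα, hf⟩ => hf ▸ fwdDiff_phiN_mem_phiSpan hα r

theorem fwdDiff_eq_zero_of_mem_phiSpan_zero {g : (Fin n → ZMod (p ^ k)) → ZMod p}
    (hg : g ∈ phiSpan p k n 0) (r : Fin n → ZMod (p ^ k)) : Δ_[r] g = 0 := by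
  suffices phiSpan p k n 0 ≤ LinearMap.ker (fwdDiffFoldₗ (ZMod p) [r]) from this hg
  refine Submodule.span_le.mpr fun _ ⟨α, hα, hf⟩ => ?_
  obtain rfl : α = 0 := funext fun i => by simpa using sum_eq_zero_iff.mp (Nat.le_zero.mp hα) i
  rw [SetLike.mem_coe, LinearMap.mem_ker, hf, phiN_zero_left]
  exact funext fun _ => sub_self 1

theorem foldr_fwdDiff_mem_phiSpan {m : ℕ} (l : List (Fin n → ZMod (p ^ k)))
    {g : (Fin n → ZMod (p ^ k)) → ZMod p} (hg : g ∈ phiSpan p k n (m + l.length)) :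
    l.foldr fwdDiff g ∈ phiSpan p k n m := by
  induction l generalizing m with
  | nil => exact hg
  | cons r l ih =>
    exact phiSpan_succ_le_comap_fwdDiff m r (ih (by simpa [add_assoc, add_comm 1] using hg))

theorem isNull_of_mem_phiSpan {d : ℕ} {g : (Fin n → ZMod (p ^ k)) → ZMod p}
    (hg : g ∈ phiSpan p k n d) : IsNull (d + 1) g := by
  rintro (_ | ⟨r, l⟩) hl
  · simp at hl
  · exact fwdDiff_eq_zero_of_mem_phiSpan_zero (foldr_fwdDiff_mem_phiSpan l (by simp_all)) r

end phiSpan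

noncomputable def unitVectorList (p k : ℕ) {n : ℕ} (α : Fin n → ℕ) : List (Fin n → ZMod (p ^ k)) :=
  (Finsupp.equivFunOnFinite.symm α).toMultiset.toList.map fun i => Pi.single i 1

def phiBox (p k n : ℕ) (γ : Fin n → Fin (p ^ k)) : (Fin n → ZMod (p ^ k)) → ZMod p :=
  phiN p k n fun i => γ i

theorem length_unitVectorList {p k n : ℕ} (α : Fin n → ℕ) :
    (unitVectorList p k α).length = ∑ i, α i := by
  simp [unitVectorList, Finsupp.card_toMultiset, Finsupp.sum_fintype]

section extraction

variable {p k n : ℕ} [Fact p.Prime]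

theorem foldr_fwdDiff_unitVectorList_phiN (α : Fin n → ℕ) {β : Fin n → ℕ}
    (hβ : ∀ j, β j < p ^ k) :
    (unitVectorList p k α).foldr fwdDiff (phiN p k n β) =
      if ∀ j, α j ≤ β j then phiN p k n (β - α) else 0 := by
  have hcount (j : Fin n) : (Finsupp.equivFunOnFinite.symm α).toMultiset.toList.count j = α j := by
    rw [← Multiset.coe_count, Multiset.coe_toList, Finsupp.count_toMultiset]
    rfl
  simp only [unitVectorList, foldr_fwdDiff_single_phiN _ hβ, hcount]

theorem foldr_fwdDiff_unitVectorList_phiBox_apply_zero (γ₀ γ : Fin n → Fin (p ^ k)) :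
    (unitVectorList p k (γ₀ · : Fin n → ℕ)).foldr fwdDiff (phiBox p k n γ) 0 =
      if γ = γ₀ then 1 else 0 := by
  rw [phiBox, foldr_fwdDiff_unitVectorList_phiN _ fun j => (γ j).isLt]
  by_cases h : γ = γ₀
  · subst h
    simp [phiN_apply_zero]
  rw [if_neg h]
  split_ifs with hle
  · rw [phiN_apply_zero, if_neg fun h0 => h (funext fun j => Fin.ext ?_)]
    have := congrFun h0 j
    have := hle j
    simp only [Pi.sub_apply, Pi.zero_apply] at *
    omega
  · rfl

theorem foldr_fwdDiff_unitVectorList_sum_apply_zero (c : (Fin n → Fin (p ^ k)) → ZMod p)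
    (γ₀ : Fin n → Fin (p ^ k)) :
    (unitVectorList p k (γ₀ · : Fin n → ℕ)).foldr fwdDiff (∑ γ, c γ • phiBox p k n γ) 0 = c γ₀ := by
  rw [← fwdDiffFoldₗ_apply (ZMod p), map_sum]
  simp [foldr_fwdDiff_unitVectorList_phiBox_apply_zero]

theorem linearIndependent_phiBox : LinearIndependent (ZMod p) (phiBox p k n) :=
  Fintype.linearIndependent_iff.mpr fun c hc γ₀ => by
    simpa [hc] using (foldr_fwdDiff_unitVectorList_sum_apply_zero c γ₀).symm

theorem span_phiBox : Submodule.span (ZMod p) (Set.range (phiBox p k n)) = ⊤ :=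
  linearIndependent_phiBox.span_eq_top_of_card_eq_finrank' (by simp)

theorem mem_phiSpan_of_isNull {d : ℕ} {g : (Fin n → ZMod (p ^ k)) → ZMod p}
    (hg : IsNull (d + 1) g) : g ∈ phiSpan p k n d := by
  obtain ⟨c, rfl⟩ := (Submodule.mem_span_range_iff_exists_fun (ZMod p)).mp
    (span_phiBox.ge (Submodule.mem_top (x := g)))
  refine sum_mem fun γ _ => ?_
  by_cases hγ : ∑ i, (γ i : ℕ) ≤ d
  · exact Submodule.smul_mem _ _ (Submodule.subset_span ⟨_, hγ, rfl⟩)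
  have hc : c γ = 0 := by
    rw [← foldr_fwdDiff_unitVectorList_sum_apply_zero c γ,
      hg.mono (by rw [length_unitVectorList]; omega) _ rfl]
    rfl
  simp [hc]

end extraction

theorem stmt_16_general (p k n d : ℕ) [Fact p.Prime]
    (g : (Fin n → ZMod (p ^ k)) → ZMod p) :
    (∀ l : List (Fin n → ZMod (p ^ k)), l.length = d + 1 →
      l.foldr (fun r h => fun x => h (x + r) - h x) g = 0) ↔
    g ∈ Submodule.span (ZMod p)
      {f : (Fin n → ZMod (p ^ k)) → ZMod p |
        ∃ α : Fin n → ℕ, (∑ i, α i) ≤ d ∧ f = phiN p k n α} :=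
  ⟨mem_phiSpan_of_isNull, isNull_of_mem_phiSpan⟩

/-- For `g : R^n → ℤ/pℤ` and `0 ≤ d ≤ n(p^k−1)`: `g` is `(d+1)`-null
(all iterated differences of order `d+1` vanish identically) iff `g ∈ Ω_d^n`. -/
theorem stmt_16 (p k n d : ℕ) [Fact p.Prime] (hk : 1 ≤ k) (hd : d ≤ n * (p ^ k - 1))
    (g : (Fin n → ZMod (p ^ k)) → ZMod p) :
    (∀ l : List (Fin n → ZMod (p ^ k)), l.length = d + 1 →
      l.foldr (fun r h => fun x => h (x + r) - h x) g = 0) ↔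
    g ∈ Submodule.span (ZMod p)
      {f : (Fin n → ZMod (p ^ k)) → ZMod p |
        ∃ α : Fin n → ℕ, (∑ i, α i) ≤ d ∧ f = phiN p k n α} :=
  stmt_16_general p k n d g
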